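/- Let M be a compact metric space with a finite good covering 𝒰 = {U_1,…,U_N}, fix L > 6, and let σ be a k-simplex of the nerve 𝒩_𝒰, realized as a geometric simplex in |𝒩_𝒰| ⊆ ℝ^N, with U_σ = ⋂_{j∈σ} U_j. Then there exists a Lipschitz strong deformation retraction of the product metric space σ × K(U_σ) onto (σ × (U_σ × {0})) ∪ (∂σ × K(U_σ)), where ∂σ is the boundary of the simplex σ and U_σ × {0} ⊆ K(U_σ) is the base of the cone. -/

import Mathlib

open Metric Set

/-- The cone distance on `M × [0,L]` (representatives of the cone
`K(M) = M × [0,L] / (M × {L})`). Two representatives are identified in the cone iff their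
cone distance is `0`. -/
noncomputable def coneDist {M : Type*} [PseudoMetricSpace M] (L : ℝ) (c c' : M × ℝ) : ℝ :=
  Real.sqrt ((L - c.2) ^ 2 + (L - c'.2) ^ 2 -
    2 * (L - c.2) * (L - c'.2) * Real.cos (min Real.pi (dist c.1 c'.1)))

/-- The distance on `σ × K(U_σ)`: `d((θ,c),(θ',c'))² = d(θ,θ')² + d_K(c,c')²`, where
`θ, θ'` carry the sup metric of `ℝ^N` (the product metric on `Fin N → ℝ`). -/
noncomputable def prodConeDist {M : Type*} [PseudoMetricSpace M] {N : ℕ} (L : ℝ)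
    (z w : (Fin N → ℝ) × M × ℝ) : ℝ :=
  Real.sqrt (dist z.1 w.1 ^ 2 + coneDist L z.2 w.2 ^ 2)

/-- A subset `V` of a metric space admits a *Lipschitz strong deformation retraction to a
point*. -/
def IsLipSDRToPoint {X : Type*} [MetricSpace X] (V : Set X) : Prop :=
  ∃ (p : V) (F : V × unitInterval → V) (K : NNReal),
    LipschitzWith K F ∧ (∀ x, F (x, 0) = x) ∧ (∀ x, F (x, 1) = p) ∧ (∀ t, F (p, t) = p)

/-- A locally finite open covering is *good*. -/
def IsGoodCovering {X : Type*} [MetricSpace X] {J : Type*} (U : J → Set X) : Prop :=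
  (∀ j, IsOpen (U j)) ∧ (⋃ j, U j) = univ ∧ LocallyFinite U ∧
    (∀ j, IsCompact (closure (U j))) ∧
    ∀ s : Finset J, s.Nonempty → (⋂ j ∈ s, U j).Nonempty → IsLipSDRToPoint (⋂ j ∈ s, U j)

/-- The closed geometric simplex of `|𝒩_𝒰| ⊆ ℝ^N` spanned by the vertices in `σ`. -/
def SimplexSet {N : ℕ} (σ : Finset (Fin N)) : Set (Fin N → ℝ) :=
  {θ | (∀ j, 0 ≤ θ j) ∧ ∑ j, θ j = 1 ∧ ∀ j, θ j ≠ 0 → j ∈ σ}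

/-!
The deformation pushes `(θ, t) ∈ σ × [0, L]` radially away from `(b, 2L)`, where `b` is the
barycenter of `σ`, so that at time `1` every point has reached `σ × {0}` or `∂σ × [0, L]`.
The base point `x ∈ U_σ` only moves near the apex of the cone: points identified at the apex
would be pulled apart by the push, so there `x` follows the Lipschitz contraction of `U_σ` to
its center for the time `a / max a (L - t)`, the ratio between the downward push `a` and the
distance `L - t` to the apex. Since the cone distance is comparable to
`|t - t'| + √((L - t)(L - t')) · min(π, d(x, x'))`, all estimates reduce to elementary
inequalities, the only delicate one being that for the angular term near the apex.
-/

open Real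

section ConeDist

variable {M : Type*} [PseudoMetricSpace M] {L : ℝ} {c c' : M × ℝ}

lemma coneDist_eq_sqrt (L : ℝ) (c c' : M × ℝ) :
    coneDist L c c' = √((c.2 - c'.2) ^ 2 +
      2 * (L - c.2) * (L - c'.2) * (1 - cos (min π (dist c.1 c'.1)))) := by
  rw [coneDist]; ring_nf

lemma coneDist_self (L : ℝ) (c : M × ℝ) : coneDist L c c = 0 := by
  simp [coneDist_eq_sqrt, pi_pos.le]

lemma abs_sub_le_coneDist (h : c.2 ≤ L) (h' : c'.2 ≤ L) : |c.2 - c'.2| ≤ coneDist L c c' := by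
  rw [coneDist_eq_sqrt]
  refine abs_le_sqrt (le_add_of_nonneg_right ?_)
  have := cos_le_one (min π (dist c.1 c'.1))
  have : 0 ≤ (L - c.2) * (L - c'.2) := mul_nonneg (by linarith) (by linarith)
  nlinarith

lemma sqrt_mul_min_pi_le_coneDist (h : c.2 ≤ L) (h' : c'.2 ≤ L) :
    √((L - c.2) * (L - c'.2)) * min π (dist c.1 c'.1) ≤ 2 * coneDist L c c' := by
  set α := min π (dist c.1 c'.1)
  have hα : 0 ≤ α := le_min pi_pos.le dist_nonneg
  have huu : 0 ≤ (L - c.2) * (L - c'.2) := mul_nonneg (by linarith) (by linarith)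
  have hcos : cos α ≤ 1 - 2 / π ^ 2 * α ^ 2 :=
    cos_le_one_sub_mul_cos_sq (by rw [abs_of_nonneg hα]; exact min_le_left _ _)
  have hπ : π ^ 2 ≤ 16 := by nlinarith [pi_le_four, pi_pos]
  have hcos' : α ^ 2 / 8 ≤ 1 - cos α := by
    have : α ^ 2 / 8 ≤ 2 / π ^ 2 * α ^ 2 := by
      rw [div_mul_eq_mul_div, div_le_div_iff₀ (by norm_num) (by positivity)]
      nlinarith [mul_le_mul_of_nonneg_left hπ (sq_nonneg α)]
    linarith
  calc √((L - c.2) * (L - c'.2)) * α = √((L - c.2) * (L - c'.2) * α ^ 2) := by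
        rw [sqrt_mul huu, sqrt_sq hα]
    _ ≤ √(2 ^ 2 * ((c.2 - c'.2) ^ 2 + 2 * (L - c.2) * (L - c'.2) * (1 - cos α))) := by
        refine sqrt_le_sqrt ?_
        nlinarith [sq_nonneg (c.2 - c'.2), mul_le_mul_of_nonneg_left hcos' huu]
    _ = 2 * coneDist L c c' := by
        rw [sqrt_mul (by norm_num), sqrt_sq (by norm_num), coneDist_eq_sqrt]

lemma coneDist_le (h : c.2 ≤ L) (h' : c'.2 ≤ L) :
    coneDist L c c' ≤ |c.2 - c'.2| + √((L - c.2) * (L - c'.2)) * min π (dist c.1 c'.1) := by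
  set α := min π (dist c.1 c'.1)
  have hα : 0 ≤ α := le_min pi_pos.le dist_nonneg
  have huu : 0 ≤ (L - c.2) * (L - c'.2) := mul_nonneg (by linarith) (by linarith)
  have hcos : 1 - α ^ 2 / 2 ≤ cos α := one_sub_sq_div_two_le_cos
  rw [coneDist_eq_sqrt, sqrt_le_left (by positivity), add_sq, mul_pow, sq_sqrt huu, sq_abs]
  nlinarith [mul_le_mul_of_nonneg_left hcos huu,
    mul_nonneg (mul_nonneg (abs_nonneg (c.2 - c'.2)) (sqrt_nonneg ((L - c.2) * (L - c'.2)))) hα]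

end ConeDist

section ProdConeDist

variable {M : Type*} [PseudoMetricSpace M] {N : ℕ} {L : ℝ} {z w : (Fin N → ℝ) × M × ℝ}

lemma dist_le_prodConeDist : dist z.1 w.1 ≤ prodConeDist L z w :=
  le_sqrt_of_sq_le (le_add_of_nonneg_right (sq_nonneg _))

lemma coneDist_le_prodConeDist : coneDist L z.2 w.2 ≤ prodConeDist L z w :=
  le_sqrt_of_sq_le (le_add_of_nonneg_left (sq_nonneg _))

lemma prodConeDist_le_add : prodConeDist L z w ≤ dist z.1 w.1 + coneDist L z.2 w.2 := by
  have : 0 ≤ coneDist L z.2 w.2 := sqrt_nonneg _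
  rw [prodConeDist, sqrt_le_left (by positivity)]
  nlinarith [dist_nonneg (x := z.1) (y := w.1)]

lemma prodConeDist_self (L : ℝ) (z : (Fin N → ℝ) × M × ℝ) : prodConeDist L z z = 0 := by
  simp [prodConeDist, coneDist_self]

end ProdConeDist

section RealEstimates

lemma abs_mul_sub_mul_le (x y x' y' : ℝ) :
    |x * y - x' * y'| ≤ |y| * |x - x'| + |x'| * |y - y'| := by
  calc |x * y - x' * y'| = |(x - x') * y + x' * (y - y')| := by ring_nf
    _ ≤ |(x - x') * y| + |x' * (y - y')| := abs_add_le _ _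
    _ = |y| * |x - x'| + |x'| * |y - y'| := by rw [abs_mul, abs_mul, mul_comm]

lemma abs_inv_sub_inv_le {μ μ' : ℝ} (h : 1 / 2 ≤ μ) (h' : 1 / 2 ≤ μ') :
    |μ⁻¹ - μ'⁻¹| ≤ 4 * |μ - μ'| := by
  have hμ : 0 < μ := by linarith
  have hμ' : 0 < μ' := by linarith
  rw [inv_sub_inv hμ.ne' hμ'.ne', abs_div, abs_sub_comm, abs_of_pos (mul_pos hμ hμ'),
    div_le_iff₀ (mul_pos hμ hμ')]
  have : 1 / 4 ≤ μ * μ' := by nlinarith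
  nlinarith [mul_le_mul_of_nonneg_left this (abs_nonneg (μ - μ'))]

lemma min_pi_le_of_le_mul_max {D d δ C : ℝ} (hd : 0 ≤ d) (hδ : 0 ≤ δ)
    (h : D ≤ C * max d δ) :
    min π D ≤ max C 1 * (min π d + δ) := by
  rcases le_total d π with hdπ | hdπ
  · rw [min_eq_right hdπ]
    calc min π D ≤ C * max d δ := (min_le_right _ _).trans h
      _ ≤ max C 1 * (d + δ) := mul_le_mul (le_max_left _ _) (max_le (by linarith) (by linarith))
          (le_max_of_le_left hd) (le_max_of_le_right zero_le_one)
  · rw [min_eq_left hdπ]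
    calc min π D ≤ 1 * (π + δ) := (min_le_left _ _).trans (by linarith)
      _ ≤ max C 1 * (π + δ) :=
          mul_le_mul_of_nonneg_right (le_max_right _ _) (by linarith [pi_pos])

lemma sqrt_mul_mul_abs_div_sub_div_le {u u' a a' : ℝ} (ha : 0 ≤ a) (ha' : 0 ≤ a')
    (hau : a < u) (hau' : a' < u') :
    √(u * u') * |a / u - a' / u'| ≤ |u - u'| + |a - a'| := by
  have hu : 0 < u := ha.trans_lt hau
  have hu' : 0 < u' := ha'.trans_lt hau'
  have hr : a / u ≤ 1 := (div_le_one hu).2 hau.le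
  have hr' : a' / u' ≤ 1 := (div_le_one hu').2 hau'.le
  set X := |a / u - a' / u'|
  set D := |u - u'| + |a - a'|
  have hX : u * X ≤ D := by
    calc u * X = |u * (a / u - a' / u')| := by rw [abs_mul, abs_of_pos hu]
      _ = |(a - a') + a' / u' * (u' - u)| := by congr 1; field_simp; ring
      _ ≤ |a - a'| + 1 * |u - u'| := by
          refine (abs_add_le _ _).trans (add_le_add_right ?_ _)
          rw [abs_mul, abs_of_nonneg (div_nonneg ha' hu'.le), abs_sub_comm]
          exact mul_le_mul_of_nonneg_right hr' (abs_nonneg _)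
      _ = D := by ring
  have hX' : u' * X ≤ D := by
    calc u' * X = |u' * (a / u - a' / u')| := by rw [abs_mul, abs_of_pos hu']
      _ = |a / u * (u' - u) + (a - a')| := by congr 1; field_simp; ring
      _ ≤ 1 * |u - u'| + |a - a'| := by
          refine (abs_add_le _ _).trans (add_le_add_left ?_ _)
          rw [abs_mul, abs_of_nonneg (div_nonneg ha hu.le), abs_sub_comm]
          exact mul_le_mul_of_nonneg_right hr (abs_nonneg _)
      _ = D := by ring
  have hX0 : 0 ≤ X := abs_nonneg _
  calc √(u * u') * X = √((u * X) * (u' * X)) := by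
        rw [show u * X * (u' * X) = u * u' * X ^ 2 by ring, sqrt_mul' _ (sq_nonneg X), sqrt_sq hX0]
    _ ≤ √(D ^ 2) := sqrt_le_sqrt (by
        rw [sq]; exact mul_le_mul hX hX' (by positivity) ((mul_nonneg hu.le hX0).trans hX))
    _ = D := sqrt_sq (by positivity)

lemma sqrt_mul_mul_le_of_lt_of_lt {u u' a a' α β C : ℝ} (ha : 0 ≤ a) (ha' : 0 ≤ a')
    (hau : a < u) (hau' : a' < u') (hβ : 0 ≤ β) (hC : 0 ≤ C)
    (hβα : β ≤ C * (α + |a / u - a' / u'|)) :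
    √((u + a) * (u' + a')) * β ≤ 2 * C * (√(u * u') * α + (|u - u'| + |a - a'|)) := by
  have hsq : √((u + a) * (u' + a')) ≤ 2 * √(u * u') := by
    rw [← sqrt_sq (zero_le_two : (0 : ℝ) ≤ 2), ← sqrt_mul (by norm_num)]
    exact sqrt_le_sqrt (by nlinarith)
  have hW := sqrt_mul_mul_abs_div_sub_div_le ha ha' hau hau'
  calc √((u + a) * (u' + a')) * β ≤ 2 * √(u * u') * β :=
        mul_le_mul_of_nonneg_right hsq hβ
    _ ≤ 2 * √(u * u') * (C * (α + |a / u - a' / u'|)) :=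
        mul_le_mul_of_nonneg_left hβα (by positivity)
    _ = 2 * C * (√(u * u') * α + √(u * u') * |a / u - a' / u'|) := by ring
    _ ≤ 2 * C * (√(u * u') * α + (|u - u'| + |a - a'|)) := by gcongr

lemma sqrt_mul_mul_le_of_le_of_lt {u u' a a' β C : ℝ} (hu : 0 ≤ u) (ha' : 0 ≤ a')
    (hua : u ≤ a) (hau' : a' < u') (hβ : 0 ≤ β) (hC : 0 ≤ C)
    (hβC : β ≤ C * (1 - a' / u')) :
    √((u + a) * (u' + a')) * β ≤ 4 * C * (|u - u'| + |a - a'|) := by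
  have hu' : 0 < u' := ha'.trans_lt hau'
  set D := |u - u'| + |a - a'|
  set r := 1 - a' / u'
  have hr0 : 0 ≤ r := sub_nonneg.2 ((div_le_one hu').2 hau'.le)
  have hr1 : r ≤ 1 := sub_le_self _ (div_nonneg ha' hu'.le)
  have hur : u' * r = u' - a' := by simp only [r]; field_simp
  have hurD : u' * r ≤ D := by
    rw [hur]; linarith [le_abs_self (u - u'), neg_abs_le (u - u'), le_abs_self (a - a')]
  have haD : a ≤ u' + D := by linarith [le_abs_self (a - a'), abs_nonneg (u - u')]
  have hD : 0 ≤ D := by positivity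
  have hprod : (u + a) * (u' + a') ≤ 4 * (a * u') := by nlinarith
  have har : a * u' * r ^ 2 ≤ 2 * D ^ 2 := by
    have : D * (u' * r) * r ≤ D * D * 1 :=
      mul_le_mul (mul_le_mul_of_nonneg_left hurD hD) hr1 hr0 (by positivity)
    nlinarith [mul_le_mul_of_nonneg_right haD (mul_nonneg hu'.le (sq_nonneg r)),
      mul_le_mul hurD hurD (mul_nonneg hu'.le hr0) hD]
  have hβ2 : β ^ 2 ≤ C ^ 2 * r ^ 2 := by rw [← mul_pow]; exact pow_le_pow_left₀ hβ hβC 2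
  calc √((u + a) * (u' + a')) * β = √((u + a) * (u' + a') * β ^ 2) := by
        rw [sqrt_mul' _ (sq_nonneg β), sqrt_sq hβ]
    _ ≤ √((4 * C * D) ^ 2) := by
        refine sqrt_le_sqrt ?_
        calc (u + a) * (u' + a') * β ^ 2 ≤ 4 * (a * u') * (C ^ 2 * r ^ 2) :=
              mul_le_mul hprod hβ2 (sq_nonneg β) (by nlinarith)
          _ = 4 * C ^ 2 * (a * u' * r ^ 2) := by ring
          _ ≤ 4 * C ^ 2 * (2 * D ^ 2) := by gcongr
          _ ≤ (4 * C * D) ^ 2 := by nlinarith [sq_nonneg (C * D)]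
    _ = 4 * C * D := sqrt_sq (by positivity)

lemma div_max_eq_one {a u : ℝ} (ha : 0 < a) (hua : u ≤ a) : a / max a u = 1 := by
  rw [max_eq_left hua, div_self ha.ne']

lemma div_max_eq_div {a u : ℝ} (hau : a < u) : a / max a u = a / u := by
  rw [max_eq_right hau.le]

/-- `u, u'` are the distances of two cone points to the apex, `u + a, u' + a'` those of their
images after the push, `α` the angle between the points and `β` the angle between the images,
whose base points have been retracted for the times `a / max a u` and `a' / max a' u'`. -/
lemma sqrt_mul_mul_le_of_retraction {u u' a a' α β C : ℝ} (hu : 0 ≤ u) (hu' : 0 ≤ u')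
    (ha : 0 ≤ a) (ha' : 0 ≤ a') (hα : 0 ≤ α) (hβ : 0 ≤ β) (hC : 0 ≤ C)
    (hβα : β ≤ C * (α + |a / max a u - a' / max a' u'|))
    (hβ1 : β ≤ C * ((1 - a / max a u) + (1 - a' / max a' u'))) :
    √((u + a) * (u' + a')) * β ≤ 4 * C * (√(u * u') * α + (|u - u'| + |a - a'|)) := by
  have hRHS : 0 ≤ 4 * C * (√(u * u') * α + (|u - u'| + |a - a'|)) := by positivity
  rcases lt_or_ge a u with hau | hua <;> rcases lt_or_ge a' u' with hau' | hua'
  · rw [div_max_eq_div hau, div_max_eq_div hau'] at hβα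
    refine (sqrt_mul_mul_le_of_lt_of_lt ha ha' hau hau' hβ hC hβα).trans ?_
    have : 0 ≤ √(u * u') * α + (|u - u'| + |a - a'|) := by positivity
    nlinarith
  · rcases ha'.eq_or_lt with ha'0 | ha'0
    · rw [show u' + a' = 0 by linarith, mul_zero, sqrt_zero, zero_mul]; exact hRHS
    rw [div_max_eq_div hau, div_max_eq_one ha'0 hua'] at hβ1
    have h := sqrt_mul_mul_le_of_le_of_lt hu' ha hua' hau hβ hC (by linarith)
    rw [mul_comm (u' + a'), abs_sub_comm u', abs_sub_comm a'] at h
    exact h.trans (mul_le_mul_of_nonneg_left (le_add_of_nonneg_left (by positivity))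
      (by positivity))
  · rcases ha.eq_or_lt with ha0 | ha0
    · rw [show u + a = 0 by linarith, zero_mul, sqrt_zero, zero_mul]; exact hRHS
    rw [div_max_eq_one ha0 hua, div_max_eq_div hau'] at hβ1
    have h := sqrt_mul_mul_le_of_le_of_lt hu ha' hua hau' hβ hC (by linarith)
    exact h.trans (mul_le_mul_of_nonneg_left (le_add_of_nonneg_left (by positivity))
      (by positivity))
  · rcases ha.eq_or_lt with ha0 | ha0
    · rw [show u + a = 0 by linarith, zero_mul, sqrt_zero, zero_mul]; exact hRHS
    rcases ha'.eq_or_lt with ha'0 | ha'0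
    · rw [show u' + a' = 0 by linarith, mul_zero, sqrt_zero, zero_mul]; exact hRHS
    rw [div_max_eq_one ha0 hua, div_max_eq_one ha'0 hua'] at hβ1
    have : β = 0 := le_antisymm (by linarith) hβ
    simp [this, hRHS]

lemma add_mul_sub_nonneg {x c μ w : ℝ} (hx : 0 ≤ x) (hμ : 0 < μ) (hw0 : 0 ≤ w)
    (hw : w ≤ μ⁻¹ - 1) (h : (1 - μ) * c ≤ x) : 0 ≤ x + w * (x - c) := by
  rcases le_total c x with hcx | hxc
  · nlinarith
  have hμx : 0 ≤ x + (μ⁻¹ - 1) * (x - c) := by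
    refine (mul_nonneg_iff_of_pos_left hμ).1 ?_
    rw [mul_add, ← mul_assoc, mul_sub μ μ⁻¹, mul_inv_cancel₀ hμ.ne']; nlinarith
  nlinarith [mul_le_mul_of_nonpos_right hw (sub_nonpos.2 hxc)]

end RealEstimates

section Retraction

variable {M : Type*} [PseudoMetricSpace M] {V : Set M} {R : V × unitInterval → V} {C : NNReal}

lemma min_pi_dist_le_of_lipschitzWith (hR : LipschitzWith C R) (y y' : V) (τ τ' : unitInterval) :
    min π (dist (R (y, τ) : M) (R (y', τ'))) ≤
      max (C : ℝ) 1 * (min π (dist (y : M) y') + |(τ : ℝ) - τ'|) := by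
  refine min_pi_le_of_le_mul_max dist_nonneg (abs_nonneg _) ?_
  have := hR.dist_le_mul (y, τ) (y', τ')
  rwa [Prod.dist_eq, Subtype.dist_eq, Subtype.dist_eq, Subtype.dist_eq, Real.dist_eq] at this

lemma dist_le_of_lipschitzWith_of_apply_one {p : V} (hR : LipschitzWith C R)
    (hR1 : ∀ y, R (y, 1) = p) (y y' : V) (τ τ' : unitInterval) :
    dist (R (y, τ) : M) (R (y', τ')) ≤ C * ((1 - τ) + (1 - τ')) := by
  have hdist : ∀ (y : V) (τ : unitInterval), dist (R (y, τ) : M) p ≤ C * (1 - τ) := by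
    intro y τ
    have hd : dist ((y, τ) : V × unitInterval) (y, 1) = 1 - τ := by
      rw [Prod.dist_eq, dist_self, Subtype.dist_eq, Real.dist_eq, abs_sub_comm]
      simp [abs_of_nonneg (sub_nonneg.2 τ.2.2), τ.2.2]
    rw [← Subtype.dist_eq]
    simpa [hR1, hd] using hR.dist_le_mul (y, τ) (y, 1)
  calc dist (R (y, τ) : M) (R (y', τ')) ≤ dist (R (y, τ) : M) p + dist (R (y', τ') : M) p :=
        dist_triangle_right _ _ _
    _ ≤ C * ((1 - τ) + (1 - τ')) := by
        rw [mul_add]; exact add_le_add (hdist y τ) (hdist y' τ')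

/-- The time for which the base point of a cone point at distance `u` from the apex, pushed
down by `a`, is retracted: it is `1` once the push exceeds the distance to the apex. -/
noncomputable def retractTime (a u : ℝ) : unitInterval := projIcc 0 1 zero_le_one (a / max a u)

lemma coe_retractTime {a u : ℝ} (ha : 0 ≤ a) : (retractTime a u : ℝ) = a / max a u := by
  rw [retractTime, projIcc_of_mem _ ⟨div_nonneg ha (le_max_of_le_left ha),
    div_le_one_of_le₀ (le_max_left _ _) (le_max_of_le_left ha)⟩]

lemma retractTime_zero (u : ℝ) : retractTime 0 u = 0 := by
  rw [retractTime, zero_div, projIcc_left]; rfl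

lemma coneDist_push_retract_le {p : V} {L : ℝ} (hR : LipschitzWith C R)
    (hR1 : ∀ y, R (y, 1) = p) (y y' : V) {t t' a a' : ℝ} (ht : t ≤ L) (ht' : t' ≤ L)
    (ha : 0 ≤ a) (ha' : 0 ≤ a') :
    coneDist L ((R (y, retractTime a (L - t)) : M), t - a)
        ((R (y', retractTime a' (L - t')) : M), t' - a') ≤
      |t - t'| + |a - a'| + 4 * max (C : ℝ) 1 *
        (√((L - t) * (L - t')) * min π (dist (y : M) y') + (|t - t'| + |a - a'|)) := by
  have hβα := min_pi_dist_le_of_lipschitzWith hR y y' (retractTime a (L - t))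
    (retractTime a' (L - t'))
  have hβ1 := dist_le_of_lipschitzWith_of_apply_one hR hR1 y y' (retractTime a (L - t))
    (retractTime a' (L - t'))
  rw [coe_retractTime ha, coe_retractTime ha'] at hβα hβ1
  have hτ := (retractTime a (L - t)).2.2
  have hτ' := (retractTime a' (L - t')).2.2
  rw [coe_retractTime ha] at hτ
  rw [coe_retractTime ha'] at hτ'
  have h := sqrt_mul_mul_le_of_retraction (sub_nonneg.2 ht) (sub_nonneg.2 ht') ha ha'
    (le_min pi_pos.le dist_nonneg) (le_min pi_pos.le dist_nonneg) (by positivity) hβα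
    ((min_le_right _ _).trans (hβ1.trans (mul_le_mul_of_nonneg_right (le_max_left _ _)
      (by linarith))))
  rw [sub_sub_sub_cancel_left, abs_sub_comm t'] at h
  refine (coneDist_le (by linarith) (by linarith)).trans ?_
  rw [show L - (t - a) = L - t + a by ring, show L - (t' - a') = L - t' + a' by ring,
    show t - a - (t' - a') = (t - t') - (a - a') by ring]
  linarith [abs_sub (t - t') (a - a')]

end Retraction

lemma Finset.abs_inf'_sub_inf'_le_dist {ι : Type*} [Fintype ι] {σ : Finset ι}
    (hσ : σ.Nonempty) (θ θ' : ι → ℝ) :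
    |σ.inf' hσ θ - σ.inf' hσ θ'| ≤ dist θ θ' := by
  have hθ : ∀ j, |θ j - θ' j| ≤ dist θ θ' := fun j => by
    rw [← Real.dist_eq]; exact dist_le_pi_dist θ θ' j
  rw [abs_sub_le_iff]
  constructor
  · suffices σ.inf' hσ θ - dist θ θ' ≤ σ.inf' hσ θ' by linarith
    exact σ.le_inf' hσ θ' fun j hj => by
      linarith [σ.inf'_le θ hj, (abs_le.1 (hθ j)).2]
  · suffices σ.inf' hσ θ' - dist θ θ' ≤ σ.inf' hσ θ by linarith
    exact σ.le_inf' hσ θ fun j hj => by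
      linarith [σ.inf'_le θ' hj, (abs_le.1 (hθ j)).1]

namespace SimplexSet

variable {N : ℕ} {σ : Finset (Fin N)} {θ : Fin N → ℝ}

lemma le_one (hθ : θ ∈ SimplexSet σ) (j : Fin N) : θ j ≤ 1 :=
  hθ.2.1 ▸ Finset.single_le_sum (fun i _ => hθ.1 i) (Finset.mem_univ j)

lemma eq_zero_of_notMem (hθ : θ ∈ SimplexSet σ) {j : Fin N} (hj : j ∉ σ) : θ j = 0 :=
  not_not.1 fun h => hj (hθ.2.2 j h)

end SimplexSet

namespace SimplexCone

variable {N : ℕ} {σ : Finset (Fin N)}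

noncomputable def barycenter (σ : Finset (Fin N)) : Fin N → ℝ :=
  fun j => if j ∈ σ then (σ.card : ℝ)⁻¹ else 0

lemma sum_barycenter (hσ : σ.Nonempty) : ∑ j, barycenter σ j = 1 := by
  simp only [barycenter]
  rw [Finset.sum_ite_mem, Finset.univ_inter, Finset.sum_const, nsmul_eq_mul,
    mul_inv_cancel₀ (by exact_mod_cast hσ.card_pos.ne')]

lemma barycenter_mem_Icc (j : Fin N) : barycenter σ j ∈ Icc (0 : ℝ) 1 := by
  unfold barycenter
  split_ifs with hj
  · exact ⟨by positivity,
      inv_le_one_of_one_le₀ (by exact_mod_cast Finset.card_pos.2 ⟨j, hj⟩)⟩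
  · exact ⟨le_rfl, zero_le_one⟩

section RadialPush

variable (hσ : σ.Nonempty) (L : ℝ)

/-- Vanishes on `∂σ` and equals `1` at the barycenter. -/
noncomputable def boundaryGap (θ : Fin N → ℝ) : ℝ := σ.card * σ.inf' hσ θ

/-- `(θ, t) ↦ (b, 2L) + ((θ, t) - (b, 2L)) / radialScale` is the radial projection from
`(barycenter σ, 2L)` onto `(σ × {0}) ∪ (∂σ × [0, L])`. -/
noncomputable def radialScale (θ : Fin N → ℝ) (t : ℝ) : ℝ :=
  max (1 - t / (2 * L)) (1 - boundaryGap hσ θ)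

noncomputable def radialPush (θ : Fin N → ℝ) (t s : ℝ) : ℝ :=
  s * ((radialScale hσ L θ t)⁻¹ - 1)

noncomputable def pushSimplex (θ : Fin N → ℝ) (t s : ℝ) : Fin N → ℝ :=
  fun j => θ j + radialPush hσ L θ t s * (θ j - barycenter σ j)

noncomputable def pushDepth (θ : Fin N → ℝ) (t s : ℝ) : ℝ :=
  radialPush hσ L θ t s * (2 * L - t)

variable {hσ L} {θ θ' : Fin N → ℝ} {t t' s s' : ℝ}

lemma boundaryGap_le (θ : Fin N → ℝ) {j : Fin N} (hj : j ∈ σ) :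
    boundaryGap hσ θ ≤ σ.card * θ j :=
  mul_le_mul_of_nonneg_left (σ.inf'_le θ hj) (Nat.cast_nonneg _)

lemma boundaryGap_mem_Icc (hθ : θ ∈ SimplexSet σ) :
    boundaryGap hσ θ ∈ Icc (0 : ℝ) 1 := by
  refine ⟨mul_nonneg (Nat.cast_nonneg _) (σ.le_inf' hσ θ fun j _ => hθ.1 j), ?_⟩
  calc boundaryGap hσ θ = ∑ _j ∈ σ, σ.inf' hσ θ := by
        rw [Finset.sum_const, nsmul_eq_mul, boundaryGap]
    _ ≤ ∑ j ∈ σ, θ j := Finset.sum_le_sum fun j hj => σ.inf'_le θ hj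
    _ ≤ ∑ j, θ j := Finset.sum_le_sum_of_subset_of_nonneg (Finset.subset_univ σ)
        fun j _ _ => hθ.1 j
    _ = 1 := hθ.2.1

lemma abs_boundaryGap_sub_le (θ θ' : Fin N → ℝ) :
    |boundaryGap hσ θ - boundaryGap hσ θ'| ≤ σ.card * dist θ θ' := by
  rw [boundaryGap, boundaryGap, ← mul_sub, abs_mul, Nat.abs_cast]
  exact mul_le_mul_of_nonneg_left (σ.abs_inf'_sub_inf'_le_dist hσ θ θ') (Nat.cast_nonneg _)

lemma radialScale_mem_Icc (hL : 0 < L) (hθ : θ ∈ SimplexSet σ) (ht : t ∈ Icc 0 L) :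
    radialScale hσ L θ t ∈ Icc (1 / 2) 1 := by
  have hgap := boundaryGap_mem_Icc (hσ := hσ) hθ
  have : t / (2 * L) ≤ 1 / 2 := by rw [div_le_iff₀ (by positivity)]; linarith [ht.2]
  have : 0 ≤ t / (2 * L) := div_nonneg ht.1 (by positivity)
  exact ⟨le_max_of_le_left (by linarith), max_le (by linarith) (by linarith [hgap.1])⟩

lemma inv_radialScale_sub_one_mem_Icc (hL : 0 < L) (hθ : θ ∈ SimplexSet σ)
    (ht : t ∈ Icc 0 L) : (radialScale hσ L θ t)⁻¹ - 1 ∈ Icc (0 : ℝ) 1 := by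
  obtain ⟨hμ, hμ1⟩ := radialScale_mem_Icc (hσ := hσ) hL hθ ht
  have h1 : 1 ≤ (radialScale hσ L θ t)⁻¹ := one_le_inv₀ (by linarith) |>.2 hμ1
  have h2 : (radialScale hσ L θ t)⁻¹ ≤ 2 := by
    rw [inv_le_comm₀ (by linarith) two_pos]; linarith
  exact ⟨by linarith, by linarith⟩

lemma radialPush_le (hL : 0 < L) (hθ : θ ∈ SimplexSet σ) (ht : t ∈ Icc 0 L)
    (hs : s ∈ Icc (0 : ℝ) 1) : radialPush hσ L θ t s ≤ (radialScale hσ L θ t)⁻¹ - 1 :=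
  mul_le_of_le_one_left (inv_radialScale_sub_one_mem_Icc hL hθ ht).1 hs.2

lemma radialPush_mem_Icc (hL : 0 < L) (hθ : θ ∈ SimplexSet σ) (ht : t ∈ Icc 0 L)
    (hs : s ∈ Icc (0 : ℝ) 1) : radialPush hσ L θ t s ∈ Icc (0 : ℝ) 1 :=
  ⟨mul_nonneg hs.1 (inv_radialScale_sub_one_mem_Icc hL hθ ht).1,
    (radialPush_le hL hθ ht hs).trans (inv_radialScale_sub_one_mem_Icc hL hθ ht).2⟩

lemma pushDepth_mem_Icc (hL : 0 < L) (hθ : θ ∈ SimplexSet σ) (ht : t ∈ Icc 0 L)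
    (hs : s ∈ Icc (0 : ℝ) 1) : pushDepth hσ L θ t s ∈ Icc 0 t := by
  obtain ⟨hμ, hμ1⟩ := radialScale_mem_Icc (hσ := hσ) hL hθ ht
  set μ := radialScale hσ L θ t
  have hμ0 : μ ≠ 0 := (by linarith : (0 : ℝ) < μ).ne'
  have hw := radialPush_mem_Icc (hσ := hσ) hL hθ ht hs
  have hμt : 1 - t / (2 * L) ≤ μ := le_max_left _ _
  have hg : (μ⁻¹ - 1) * (2 * L - t) ≤ t := by
    have h2L : 2 * L * (1 - μ) ≤ t := by
      have : 1 - μ ≤ t / (2 * L) := by linarith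
      rwa [le_div_iff₀ (by positivity), mul_comm] at this
    refine le_of_mul_le_mul_right ?_ (by linarith : 0 < μ)
    calc (μ⁻¹ - 1) * (2 * L - t) * μ = (1 - μ) * (2 * L - t) := by field_simp
      _ ≤ t * μ := by nlinarith
  have hg0 : 0 ≤ (μ⁻¹ - 1) * (2 * L - t) := by
    have : 1 ≤ μ⁻¹ := one_le_inv₀ (by linarith) |>.2 hμ1
    exact mul_nonneg (by linarith) (by linarith [ht.2])
  refine ⟨mul_nonneg hw.1 (by linarith [ht.2]), ?_⟩
  calc pushDepth hσ L θ t s = s * ((μ⁻¹ - 1) * (2 * L - t)) := by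
        rw [pushDepth, radialPush, mul_assoc]
    _ ≤ 1 * t := mul_le_mul hs.2 hg hg0 zero_le_one
    _ = t := one_mul t

lemma pushSimplex_mem (hL : 0 < L) (hθ : θ ∈ SimplexSet σ) (ht : t ∈ Icc 0 L)
    (hs : s ∈ Icc (0 : ℝ) 1) : pushSimplex hσ L θ t s ∈ SimplexSet σ := by
  have hb : ∀ j ∉ σ, barycenter σ j = 0 := fun j hj => if_neg hj
  refine ⟨fun j => ?_, ?_, fun j hj => ?_⟩
  · by_cases hj : j ∈ σ
    · obtain ⟨hμ, -⟩ := radialScale_mem_Icc (hσ := hσ) hL hθ ht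
      have hn : (0 : ℝ) < σ.card := by exact_mod_cast Finset.card_pos.2 ⟨j, hj⟩
      refine add_mul_sub_nonneg (hθ.1 j) (by linarith) (radialPush_mem_Icc hL hθ ht hs).1
        (radialPush_le hL hθ ht hs) ?_
      have hgap : 1 - radialScale hσ L θ t ≤ σ.card * θ j :=
        (le_max_right _ _ |> sub_le_comm.1).trans (boundaryGap_le θ hj)
      rw [barycenter, if_pos hj, ← div_eq_mul_inv, div_le_iff₀ hn]
      linarith
    · simp [pushSimplex, SimplexSet.eq_zero_of_notMem hθ hj, hb j hj]
  · simp only [pushSimplex]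
    rw [Finset.sum_add_distrib, ← Finset.mul_sum, Finset.sum_sub_distrib, hθ.2.1,
      sum_barycenter hσ]
    ring
  · by_contra hj'
    exact hj (by simp [pushSimplex, SimplexSet.eq_zero_of_notMem hθ hj', hb j hj'])

lemma abs_radialScale_sub_le (hL : 0 < L) (θ θ' : Fin N → ℝ) (t t' : ℝ) :
    |radialScale hσ L θ t - radialScale hσ L θ' t'| ≤
      (2 * L)⁻¹ * |t - t'| + σ.card * dist θ θ' := by
  refine (abs_max_sub_max_le_max _ _ _ _).trans (max_le ?_ ?_)
  · rw [sub_sub_sub_cancel_left, ← sub_div, abs_div,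
      abs_of_pos (by linarith : (0 : ℝ) < 2 * L), abs_sub_comm, div_eq_inv_mul]
    exact le_add_of_nonneg_right (mul_nonneg (Nat.cast_nonneg _) dist_nonneg)
  · rw [sub_sub_sub_cancel_left, abs_sub_comm]
    exact (abs_boundaryGap_sub_le θ θ').trans
      (le_add_of_nonneg_left (mul_nonneg (inv_nonneg.2 (by linarith)) (abs_nonneg _)))

section Lipschitz

variable {E : ℝ}

lemma abs_radialPush_sub_le (hL : 0 < L) (hθ : θ ∈ SimplexSet σ) (hθ' : θ' ∈ SimplexSet σ)
    (ht : t ∈ Icc 0 L) (ht' : t' ∈ Icc 0 L) (hs' : s' ∈ Icc (0 : ℝ) 1)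
    (hθE : dist θ θ' ≤ E) (htE : |t - t'| ≤ E) (hsE : |s - s'| ≤ E) :
    |radialPush hσ L θ t s - radialPush hσ L θ' t' s'| ≤
      (1 + 4 * ((2 * L)⁻¹ + σ.card)) * E := by
  have hg := inv_radialScale_sub_one_mem_Icc (hσ := hσ) hL hθ ht
  have hE : 0 ≤ E := dist_nonneg.trans hθE
  have hμ : |radialScale hσ L θ t - radialScale hσ L θ' t'| ≤
      ((2 * L)⁻¹ + σ.card) * E := by
    refine (abs_radialScale_sub_le hL θ θ' t t').trans ?_
    rw [add_mul]
    exact add_le_add (mul_le_mul_of_nonneg_left htE (by positivity))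
      (mul_le_mul_of_nonneg_left hθE (by positivity))
  have hΔg := abs_inv_sub_inv_le (radialScale_mem_Icc (hσ := hσ) hL hθ ht).1
    (radialScale_mem_Icc (hσ := hσ) hL hθ' ht').1
  calc |radialPush hσ L θ t s - radialPush hσ L θ' t' s'|
      ≤ |(radialScale hσ L θ t)⁻¹ - 1| * |s - s'| +
          |s'| * |(radialScale hσ L θ t)⁻¹ - 1 - ((radialScale hσ L θ' t')⁻¹ - 1)| :=
        abs_mul_sub_mul_le _ _ _ _
    _ ≤ 1 * E + 1 * (4 * (((2 * L)⁻¹ + σ.card) * E)) := by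
        rw [sub_sub_sub_cancel_right, abs_of_nonneg hg.1, abs_of_nonneg hs'.1]
        gcongr
        · exact hg.2
        · exact hs'.2
        · exact hΔg.trans (by gcongr)
    _ = (1 + 4 * ((2 * L)⁻¹ + σ.card)) * E := by ring

lemma dist_pushSimplex_le (hL : 0 < L) (hθ : θ ∈ SimplexSet σ) (hθ' : θ' ∈ SimplexSet σ)
    (ht : t ∈ Icc 0 L) (ht' : t' ∈ Icc 0 L) (hs' : s' ∈ Icc (0 : ℝ) 1)
    (hθE : dist θ θ' ≤ E) (htE : |t - t'| ≤ E) (hsE : |s - s'| ≤ E) :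
    dist (pushSimplex hσ L θ t s) (pushSimplex hσ L θ' t' s') ≤
      (2 + (1 + 4 * ((2 * L)⁻¹ + σ.card))) * E := by
  have hw := abs_radialPush_sub_le (hσ := hσ) hL hθ hθ' ht ht' hs' hθE htE hsE
  have hw' := radialPush_mem_Icc (hσ := hσ) hL hθ' ht' hs'
  have hE : 0 ≤ E := dist_nonneg.trans hθE
  refine (dist_pi_le_iff (by positivity)).2 fun j => ?_
  have hj : |θ j - θ' j| ≤ E := (Real.dist_eq _ _ ▸ dist_le_pi_dist θ θ' j).trans hθE
  have hb := barycenter_mem_Icc (σ := σ) j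
  have hθb : |θ j - barycenter σ j| ≤ 1 :=
    abs_sub_le_iff.2 ⟨by linarith [SimplexSet.le_one hθ j, hb.1], by linarith [hθ.1 j, hb.2]⟩
  rw [Real.dist_eq]
  calc |pushSimplex hσ L θ t s j - pushSimplex hσ L θ' t' s' j|
      ≤ |θ j - θ' j| + (|θ j - barycenter σ j| *
          |radialPush hσ L θ t s - radialPush hσ L θ' t' s'| +
          |radialPush hσ L θ' t' s'| * |θ j - barycenter σ j - (θ' j - barycenter σ j)|) := by
        simp only [pushSimplex]
        rw [add_sub_add_comm]
        exact (abs_add_le _ _).trans (add_le_add_right (abs_mul_sub_mul_le _ _ _ _) _)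
    _ ≤ E + (1 * ((1 + 4 * ((2 * L)⁻¹ + σ.card)) * E) + 1 * E) := by
        rw [sub_sub_sub_cancel_right, abs_of_nonneg hw'.1]
        gcongr
        exact hw'.2
    _ = (2 + (1 + 4 * ((2 * L)⁻¹ + σ.card))) * E := by ring

lemma abs_pushDepth_sub_le (hL : 0 < L) (hθ : θ ∈ SimplexSet σ) (hθ' : θ' ∈ SimplexSet σ)
    (ht : t ∈ Icc 0 L) (ht' : t' ∈ Icc 0 L) (hs' : s' ∈ Icc (0 : ℝ) 1)
    (hθE : dist θ θ' ≤ E) (htE : |t - t'| ≤ E) (hsE : |s - s'| ≤ E) :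
    |pushDepth hσ L θ t s - pushDepth hσ L θ' t' s'| ≤
      (2 * L * (1 + 4 * ((2 * L)⁻¹ + σ.card)) + 1) * E := by
  have hw := abs_radialPush_sub_le (hσ := hσ) hL hθ hθ' ht ht' hs' hθE htE hsE
  have hw' := radialPush_mem_Icc (hσ := hσ) hL hθ' ht' hs'
  calc |pushDepth hσ L θ t s - pushDepth hσ L θ' t' s'|
      ≤ |2 * L - t| * |radialPush hσ L θ t s - radialPush hσ L θ' t' s'| +
          |radialPush hσ L θ' t' s'| * |2 * L - t - (2 * L - t')| :=
        abs_mul_sub_mul_le _ _ _ _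
    _ ≤ 2 * L * ((1 + 4 * ((2 * L)⁻¹ + σ.card)) * E) + 1 * E := by
        rw [sub_sub_sub_cancel_left, abs_sub_comm t', abs_of_nonneg hw'.1,
          abs_of_nonneg (by linarith [ht.2])]
        gcongr
        · linarith [ht.1]
        · exact hw'.2
    _ = (2 * L * (1 + 4 * ((2 * L)⁻¹ + σ.card)) + 1) * E := by ring

end Lipschitz

lemma radialPush_eq_zero (hL : 0 < L) (hθ : θ ∈ SimplexSet σ) (ht : t ∈ Icc 0 L)
    (h : t = 0 ∨ ∃ j ∈ σ, θ j = 0) : radialPush hσ L θ t s = 0 := by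
  have hgap := boundaryGap_mem_Icc (hσ := hσ) hθ
  suffices radialScale hσ L θ t = 1 by rw [radialPush, this, inv_one, sub_self, mul_zero]
  rcases h with rfl | ⟨j, hj, hθj⟩
  · rw [radialScale, zero_div, sub_zero, max_eq_left (by linarith [hgap.1])]
  · have : boundaryGap hσ θ = 0 :=
      le_antisymm (by simpa [hθj] using boundaryGap_le (hσ := hσ) θ hj) hgap.1
    have ht0 : 0 ≤ t / (2 * L) := div_nonneg ht.1 (by linarith)
    rw [radialScale, this, sub_zero, max_eq_right (by linarith)]

lemma pushDepth_one_eq_or (hL : 0 < L) (hθ : θ ∈ SimplexSet σ) (ht : t ∈ Icc 0 L) :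
    t - pushDepth hσ L θ t 1 = 0 ∨ ∃ j ∈ σ, pushSimplex hσ L θ t 1 j = 0 := by
  obtain ⟨hμ, -⟩ := radialScale_mem_Icc (hσ := hσ) hL hθ ht
  rcases le_total (1 - boundaryGap hσ θ) (1 - t / (2 * L)) with h | h
  · left
    have hμ' : radialScale hσ L θ t = (2 * L - t) / (2 * L) := by
      rw [radialScale, max_eq_left h]; field_simp
    have : 2 * L - t ≠ 0 := by linarith [ht.2]
    rw [pushDepth, radialPush, hμ']
    field_simp
    ring
  · right
    obtain ⟨j, hj, hθj⟩ := σ.exists_mem_eq_inf' hσ θ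
    refine ⟨j, hj, ?_⟩
    have hμ' : radialScale hσ L θ t = 1 - σ.card * θ j := by
      rw [radialScale, max_eq_right h, boundaryGap, hθj]
    have hμ0 : 1 - θ j * σ.card ≠ 0 := by rw [mul_comm, ← hμ']; linarith
    have hn : (σ.card : ℝ) ≠ 0 := by exact_mod_cast hσ.card_pos.ne'
    simp only [pushSimplex, radialPush, hμ', barycenter, if_pos hj]
    field_simp
    ring

end RadialPush

section ConeRetraction

variable {M : Type*} {V : Set M} (hσ : σ.Nonempty) (L : ℝ)

open Classical in
noncomputable def coneRetraction (R : V × unitInterval → V)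
    (z : ((Fin N → ℝ) × M × ℝ) × unitInterval) : (Fin N → ℝ) × M × ℝ :=
  (pushSimplex hσ L z.1.1 z.1.2.2 z.2,
    if hx : z.1.2.1 ∈ V then
      (R (⟨z.1.2.1, hx⟩, retractTime (pushDepth hσ L z.1.1 z.1.2.2 z.2) (L - z.1.2.2)) : M)
    else z.1.2.1,
    z.1.2.2 - pushDepth hσ L z.1.1 z.1.2.2 z.2)

variable {hσ L} {R : V × unitInterval → V} {θ : Fin N → ℝ} {x : M} {t : ℝ}

lemma coneRetraction_apply (hx : x ∈ V) (s : unitInterval) :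
    coneRetraction hσ L R ((θ, x, t), s) =
      (pushSimplex hσ L θ t s,
        (R (⟨x, hx⟩, retractTime (pushDepth hσ L θ t s) (L - t)) : M),
        t - pushDepth hσ L θ t s) := by
  simp [coneRetraction, hx]

lemma coneRetraction_mem (hL : 0 < L) (hθ : θ ∈ SimplexSet σ) (hx : x ∈ V)
    (ht : t ∈ Icc 0 L) (s : unitInterval) :
    (coneRetraction hσ L R ((θ, x, t), s)).1 ∈ SimplexSet σ ∧
      (coneRetraction hσ L R ((θ, x, t), s)).2.1 ∈ V ∧
      (coneRetraction hσ L R ((θ, x, t), s)).2.2 ∈ Icc 0 L := by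
  have ha := pushDepth_mem_Icc (hσ := hσ) hL hθ ht s.2
  rw [coneRetraction_apply hx]
  exact ⟨pushSimplex_mem hL hθ ht s.2, (R _).2, by linarith [ha.2], by linarith [ha.1, ht.2]⟩

lemma coneRetraction_eq_self (hR0 : ∀ y, R (y, 0) = y) (hx : x ∈ V) {s : unitInterval}
    (hw : radialPush hσ L θ t s = 0) : coneRetraction hσ L R ((θ, x, t), s) = (θ, x, t) := by
  have ha : pushDepth hσ L θ t s = 0 := by rw [pushDepth, hw, zero_mul]
  rw [coneRetraction_apply hx, ha, retractTime_zero, hR0, sub_zero]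
  congr
  funext j
  rw [pushSimplex, hw, zero_mul, add_zero]

lemma coneRetraction_one_eq_or (hL : 0 < L) (hθ : θ ∈ SimplexSet σ) (ht : t ∈ Icc 0 L) :
    (coneRetraction hσ L R ((θ, x, t), 1)).2.2 = 0 ∨
      ∃ j ∈ σ, (coneRetraction hσ L R ((θ, x, t), 1)).1 j = 0 :=
  pushDepth_one_eq_or hL hθ ht

theorem exists_prodConeDist_coneRetraction_le [PseudoMetricSpace M] (hL : 0 < L)
    {C : NNReal} {p : V} (hR : LipschitzWith C R) (hR1 : ∀ y, R (y, 1) = p) :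
    ∃ K : NNReal, ∀ z w : (Fin N → ℝ) × M × ℝ,
      z.1 ∈ SimplexSet σ → z.2.1 ∈ V → z.2.2 ∈ Icc 0 L →
      w.1 ∈ SimplexSet σ → w.2.1 ∈ V → w.2.2 ∈ Icc 0 L → ∀ s s' : unitInterval,
        prodConeDist L (coneRetraction hσ L R (z, s)) (coneRetraction hσ L R (w, s')) ≤
          K * max (prodConeDist L z w) (dist s s') := by
  set c := 1 + 4 * ((2 * L)⁻¹ + σ.card)
  set C' := max (C : ℝ) 1
  refine ⟨(4 + c + 2 * L * c + 4 * C' * (4 + 2 * L * c)).toNNReal, ?_⟩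
  rintro ⟨θ, x, t⟩ ⟨θ', x', t'⟩ hθ hx ht hθ' hx' ht' s s'
  set E := max (prodConeDist L (θ, x, t) (θ', x', t')) (dist s s')
  have hE : 0 ≤ E := le_max_of_le_right dist_nonneg
  have hθE : dist θ θ' ≤ E :=
    (dist_le_prodConeDist (L := L) (z := (θ, x, t)) (w := (θ', x', t'))).trans (le_max_left _ _)
  have hcE : coneDist L (x, t) (x', t') ≤ E :=
    (coneDist_le_prodConeDist (z := (θ, x, t)) (w := (θ', x', t'))).trans (le_max_left _ _)
  have htE : |t - t'| ≤ E := (abs_sub_le_coneDist ht.2 ht'.2).trans hcE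
  have hsE : |(s : ℝ) - s'| ≤ E := by
    have := le_max_right (prodConeDist L (θ, x, t) (θ', x', t')) (dist s s')
    rwa [Subtype.dist_eq, Real.dist_eq] at this
  have hαE : √((L - t) * (L - t')) * min π (dist x x') ≤ 2 * E :=
    (sqrt_mul_min_pi_le_coneDist ht.2 ht'.2).trans (by linarith)
  have hθ₁ := dist_pushSimplex_le (hσ := hσ) hL hθ hθ' ht ht' s'.2 hθE htE hsE
  have ha := abs_pushDepth_sub_le (hσ := hσ) hL hθ hθ' ht ht' s'.2 hθE htE hsE
  have hcone := coneDist_push_retract_le hR hR1 ⟨x, hx⟩ ⟨x', hx'⟩ ht.2 ht'.2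
    (pushDepth_mem_Icc (hσ := hσ) hL hθ ht s.2).1
    (pushDepth_mem_Icc (hσ := hσ) hL hθ' ht' s'.2).1
  have hC' : 4 * C' * (√((L - t) * (L - t')) * min π (dist x x') +
      (|t - t'| + |pushDepth hσ L θ t s - pushDepth hσ L θ' t' s'|)) ≤
      4 * C' * ((4 + 2 * L * c) * E) :=
    mul_le_mul_of_nonneg_left (by linarith) (by positivity)
  rw [coneRetraction_apply hx, coneRetraction_apply hx']
  calc _ ≤ _ := prodConeDist_le_add
    _ ≤ (4 + c + 2 * L * c + 4 * C' * (4 + 2 * L * c)) * E := by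
        linarith
    _ ≤ _ := mul_le_mul_of_nonneg_right (Real.le_coe_toNNReal _) hE

end ConeRetraction

end SimplexCone

theorem simplex_cone_lipSDR_general {M : Type*} [MetricSpace M]
    {N : ℕ} (U : Fin N → Set M) (hU : IsGoodCovering U) (L : ℝ) (hL : 6 < L)
    (k : ℕ) (σ : Finset (Fin N)) (hcard : σ.card = k + 1)
    (hσ : (⋂ j ∈ σ, U j).Nonempty) :
    ∃ (F : ((Fin N → ℝ) × M × ℝ) × unitInterval → (Fin N → ℝ) × M × ℝ) (K : NNReal),
      (∀ z : (Fin N → ℝ) × M × ℝ,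
        z.1 ∈ SimplexSet σ → z.2.1 ∈ ⋂ j ∈ σ, U j → z.2.2 ∈ Icc 0 L →
        ∀ t : unitInterval,
          (F (z, t)).1 ∈ SimplexSet σ ∧ (F (z, t)).2.1 ∈ ⋂ j ∈ σ, U j ∧
            (F (z, t)).2.2 ∈ Icc 0 L) ∧
      (∀ z w : (Fin N → ℝ) × M × ℝ,
        z.1 ∈ SimplexSet σ → z.2.1 ∈ ⋂ j ∈ σ, U j → z.2.2 ∈ Icc 0 L →
        w.1 ∈ SimplexSet σ → w.2.1 ∈ ⋂ j ∈ σ, U j → w.2.2 ∈ Icc 0 L →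
        ∀ s t : unitInterval,
          prodConeDist L (F (z, s)) (F (w, t)) ≤
            K * max (prodConeDist L z w) (dist s t)) ∧
      (∀ z : (Fin N → ℝ) × M × ℝ,
        z.1 ∈ SimplexSet σ → z.2.1 ∈ ⋂ j ∈ σ, U j → z.2.2 ∈ Icc 0 L →
          prodConeDist L (F (z, 0)) z = 0) ∧
      (∀ z : (Fin N → ℝ) × M × ℝ,
        z.1 ∈ SimplexSet σ → z.2.1 ∈ ⋂ j ∈ σ, U j → z.2.2 ∈ Icc 0 L →
          ((F (z, 1)).2.2 = 0 ∨ ∃ j ∈ σ, (F (z, 1)).1 j = 0)) ∧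
      (∀ z : (Fin N → ℝ) × M × ℝ,
        z.1 ∈ SimplexSet σ → z.2.1 ∈ ⋂ j ∈ σ, U j → z.2.2 ∈ Icc 0 L →
        (z.2.2 = 0 ∨ ∃ j ∈ σ, z.1 j = 0) →
        ∀ t : unitInterval, prodConeDist L (F (z, t)) z = 0) := by
  have hσ₀ : σ.Nonempty := Finset.card_pos.1 (by omega)
  have hL₀ : 0 < L := by linarith
  obtain ⟨p, R, C, hR, hR0, hR1, -⟩ := hU.2.2.2.2 σ hσ₀ hσ
  obtain ⟨K, hK⟩ :=
    SimplexCone.exists_prodConeDist_coneRetraction_le (hσ := hσ₀) hL₀ hR hR1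
  refine ⟨SimplexCone.coneRetraction hσ₀ L R, K, ?_, hK, ?_, ?_, ?_⟩
  · rintro ⟨θ, x, t⟩ hθ hx ht s
    exact SimplexCone.coneRetraction_mem hL₀ hθ hx ht s
  · rintro ⟨θ, x, t⟩ - hx -
    rw [SimplexCone.coneRetraction_eq_self hR0 hx (zero_mul _)]
    exact prodConeDist_self L _
  · rintro ⟨θ, x, t⟩ hθ - ht
    exact SimplexCone.coneRetraction_one_eq_or hL₀ hθ ht
  · rintro ⟨θ, x, t⟩ hθ hx ht h s
    rw [SimplexCone.coneRetraction_eq_self hR0 hx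
      (SimplexCone.radialPush_eq_zero hL₀ hθ ht h)]
    exact prodConeDist_self L _

/-- For a `k`-simplex `σ` of the nerve of a finite good covering of a
compact metric space, the product `σ × K(U_σ)` admits a Lipschitz strong deformation
retraction onto `(σ × U_σ × {0}) ∪ (∂σ × K(U_σ))`.  Everything is expressed on
representatives `(θ, x, t) ∈ σ × U_σ × [0,L]` of `σ × K(U_σ)`, with Lipschitz continuity
measured by the distance `prodConeDist` and equality in the cone expressed as vanishing of
that distance. -/
theorem simplex_cone_lipSDR {M : Type*} [MetricSpace M] [CompactSpace M]
    {N : ℕ} (U : Fin N → Set M) (hU : IsGoodCovering U) (L : ℝ) (hL : 6 < L)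
    (k : ℕ) (σ : Finset (Fin N)) (hcard : σ.card = k + 1)
    (hσ : (⋂ j ∈ σ, U j).Nonempty) :
    ∃ (F : ((Fin N → ℝ) × M × ℝ) × unitInterval → (Fin N → ℝ) × M × ℝ) (K : NNReal),
      (∀ z : (Fin N → ℝ) × M × ℝ,
        z.1 ∈ SimplexSet σ → z.2.1 ∈ ⋂ j ∈ σ, U j → z.2.2 ∈ Icc 0 L →
        ∀ t : unitInterval,
          (F (z, t)).1 ∈ SimplexSet σ ∧ (F (z, t)).2.1 ∈ ⋂ j ∈ σ, U j ∧
            (F (z, t)).2.2 ∈ Icc 0 L) ∧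
      (∀ z w : (Fin N → ℝ) × M × ℝ,
        z.1 ∈ SimplexSet σ → z.2.1 ∈ ⋂ j ∈ σ, U j → z.2.2 ∈ Icc 0 L →
        w.1 ∈ SimplexSet σ → w.2.1 ∈ ⋂ j ∈ σ, U j → w.2.2 ∈ Icc 0 L →
        ∀ s t : unitInterval,
          prodConeDist L (F (z, s)) (F (w, t)) ≤
            K * max (prodConeDist L z w) (dist s t)) ∧
      (∀ z : (Fin N → ℝ) × M × ℝ,
        z.1 ∈ SimplexSet σ → z.2.1 ∈ ⋂ j ∈ σ, U j → z.2.2 ∈ Icc 0 L →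
          prodConeDist L (F (z, 0)) z = 0) ∧
      (∀ z : (Fin N → ℝ) × M × ℝ,
        z.1 ∈ SimplexSet σ → z.2.1 ∈ ⋂ j ∈ σ, U j → z.2.2 ∈ Icc 0 L →
          ((F (z, 1)).2.2 = 0 ∨ ∃ j ∈ σ, (F (z, 1)).1 j = 0)) ∧
      (∀ z : (Fin N → ℝ) × M × ℝ,
        z.1 ∈ SimplexSet σ → z.2.1 ∈ ⋂ j ∈ σ, U j → z.2.2 ∈ Icc 0 L →
        (z.2.2 = 0 ∨ ∃ j ∈ σ, z.1 j = 0) →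
        ∀ t : unitInterval, prodConeDist L (F (z, t)) z = 0) :=
  simplex_cone_lipSDR_general U hU L hL k σ hcard hσ
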